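/- arXiv:1510.06583 — 4 statements merged into one kernel-verified Lean document; each statement's English description precedes it below -/
import Mathlib

section
/- Let c : V × V → W be a normal 2-cocycle between F₂-vector spaces (with trivial action). Then the map q_c : V → W defined by q_c(x) = c(x,x) is a quadratic map. -/
/-!
For a 2-cocycle `c` with trivial coefficients on an abelian group, the commutator pairing
`c x y - c y x` is biadditive: it is the commutator map of the central extension defined by `c`.
When `V` and `W` have exponent two, three instances of the cocycle identity expand
`c (x + y) (x + y)` and show that the polar form of `x ↦ c x x` is exactly this pairing;
homogeneity over `𝔽₂` amounts to `c 0 0 = 0`.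
-/

def IsTwoCocycle {G A : Type*} [AddCommGroup G] [AddCommGroup A] (c : G → G → A) : Prop :=
  ∀ a b d : G, c b d - c (a + b) d + c a (b + d) - c a b = 0

namespace IsTwoCocycle

section AddCommGroup

variable {G A : Type*} [AddCommGroup G] [AddCommGroup A] {c : G → G → A}

theorem apply_zero_right (hc : IsTwoCocycle c) (x : G) : c x 0 = c 0 0 := by
  simpa [sub_eq_zero, eq_comm] using hc x 0 0

theorem commutator_add_left (hc : IsTwoCocycle c) (a b d : G) :
    c (a + b) d - c d (a + b) = (c a d - c d a) + (c b d - c d b) := by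
  have h₁ := hc a b d
  have h₂ := hc d a b
  have h₃ := hc a d b
  rw [add_comm d a] at h₂
  rw [add_comm d b] at h₃
  linear_combination (norm := abel) -h₁ - h₂ + h₃

def commutator (hc : IsTwoCocycle c) : G →+ G →+ A :=
  AddMonoidHom.mk' (fun x ↦ AddMonoidHom.mk' (fun y ↦ c x y - c y x) fun y y' ↦ by
      rw [← neg_sub, hc.commutator_add_left, neg_add, neg_sub, neg_sub])
    fun x x' ↦ by ext y; exact hc.commutator_add_left x x' y

theorem commutator_apply (hc : IsTwoCocycle c) (x y : G) : hc.commutator x y = c x y - c y x :=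
  rfl

end AddCommGroup

section ZModTwo

variable {V W : Type*} [AddCommGroup V] [Module (ZMod 2) V] [AddCommGroup W] [Module (ZMod 2) W]
  {c : V → V → W}

theorem polar_diag_eq_commutator (hc : IsTwoCocycle c) (h₀ : c 0 0 = 0) (x y : V) :
    QuadraticMap.polar (fun v ↦ c v v) x y = hc.commutator x y := by
  have h₁ := hc x y (x + y)
  have h₂ := hc y x y
  have h₃ := hc x y y
  rw [add_left_comm, ZModModule.add_self, add_zero] at h₁
  rw [add_comm y x] at h₂
  rw [ZModModule.add_self, hc.apply_zero_right, h₀] at h₃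
  simp only [QuadraticMap.polar, commutator_apply]
  -- the identity holds only modulo 2, so the coefficients are taken in `ZMod 2`
  linear_combination (norm := match_scalars <;> decide) (1 : ZMod 2) • (h₁ + h₂ + h₃)

def diagQuadraticMap (hc : IsTwoCocycle c) (h₀ : c 0 0 = 0) : QuadraticMap (ZMod 2) V W :=
  QuadraticMap.ofPolar (fun v ↦ c v v)
    (fun a x ↦ by
      obtain rfl | rfl : a = 0 ∨ a = 1 := by decide +revert
      · simp [h₀]
      · simp)
    (fun x x' y ↦ by
      simp only [hc.polar_diag_eq_commutator h₀, map_add, AddMonoidHom.add_apply])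
    (fun a x y ↦ by
      simp only [hc.polar_diag_eq_commutator h₀, ZMod.map_smul hc.commutator,
        AddMonoidHom.smul_apply])

end ZModTwo
end IsTwoCocycle

theorem quadratic_map_of_normal_two_cocycle_general
    (V W : Type*) [AddCommGroup V] [Module (ZMod 2) V] [AddCommGroup W] [Module (ZMod 2) W]
    (c : V → V → W)
    (hcocycle : ∀ v₁ v₂ v₃ : V,
      c v₂ v₃ - c (v₁ + v₂) v₃ + c v₁ (v₂ + v₃) - c v₁ v₂ = 0)
    (hnorm_right : ∀ v : V, c v 0 = 0) :
    (∀ (α : ZMod 2) (v : V), c (α • v) (α • v) = (α ^ 2) • c v v) ∧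
    (∀ v v' w : V,
      (c (v + v' + w) (v + v' + w) - c (v + v') (v + v') - c w w) =
        (c (v + w) (v + w) - c v v - c w w) + (c (v' + w) (v' + w) - c v' v' - c w w)) ∧
    (∀ v w w' : V,
      (c (v + (w + w')) (v + (w + w')) - c v v - c (w + w') (w + w')) =
        (c (v + w) (v + w) - c v v - c w w) + (c (v + w') (v + w') - c v v - c w' w')) ∧
    (∀ (α : ZMod 2) (v w : V),
      (c (α • v + w) (α • v + w) - c (α • v) (α • v) - c w w) =
        α • (c (v + w) (v + w) - c v v - c w w)) ∧
    (∀ (α : ZMod 2) (v w : V),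
      (c (v + α • w) (v + α • w) - c v v - c (α • w) (α • w)) =
        α • (c (v + w) (v + w) - c v v - c w w)) := by
  let q := IsTwoCocycle.diagQuadraticMap hcocycle (hnorm_right 0)
  refine ⟨fun α v ↦ ?_, q.polar_add_left, q.polar_add_right, q.polar_smul_left,
    q.polar_smul_right⟩
  rw [sq]
  exact q.map_smul α v

/-- If `c : V × V → W` is a normal 2-cocycle between `F₂`-vector spaces (trivial
action), then `q_c(x) = c(x,x)` is a quadratic map: `q_c(αv) = α² q_c(v)` and the
polar map `b(v,w) = q_c(v+w) - q_c(v) - q_c(w)` is bilinear. -/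
theorem quadratic_map_of_normal_two_cocycle
    (V W : Type*) [AddCommGroup V] [Module (ZMod 2) V] [AddCommGroup W] [Module (ZMod 2) W]
    (c : V → V → W)
    (hcocycle : ∀ v₁ v₂ v₃ : V,
      c v₂ v₃ - c (v₁ + v₂) v₃ + c v₁ (v₂ + v₃) - c v₁ v₂ = 0)
    (hnorm_right : ∀ v : V, c v 0 = 0) (hnorm_left : ∀ v : V, c 0 v = 0) :
    (∀ (α : ZMod 2) (v : V), c (α • v) (α • v) = (α ^ 2) • c v v) ∧
    (∀ v v' w : V,
      (c (v + v' + w) (v + v' + w) - c (v + v') (v + v') - c w w) =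
        (c (v + w) (v + w) - c v v - c w w) + (c (v' + w) (v' + w) - c v' v' - c w w)) ∧
    (∀ v w w' : V,
      (c (v + (w + w')) (v + (w + w')) - c v v - c (w + w') (w + w')) =
        (c (v + w) (v + w) - c v v - c w w) + (c (v + w') (v + w') - c v v - c w' w')) ∧
    (∀ (α : ZMod 2) (v w : V),
      (c (α • v + w) (α • v + w) - c (α • v) (α • v) - c w w) =
        α • (c (v + w) (v + w) - c v v - c w w)) ∧
    (∀ (α : ZMod 2) (v w : V),
      (c (v + α • w) (v + α • w) - c v v - c (α • w) (α • w)) =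
        α • (c (v + w) (v + w) - c v v - c w w)) :=
  quadratic_map_of_normal_two_cocycle_general V W c hcocycle hnorm_right
end

section
/- A special 2-group G is real (every element is conjugate to its inverse) if and only if for all v ∈ V := G/Z(G), there exists v' ∈ V such that q(v') = q(v + v'), where q is the quadratic map associated to G. -/
structure IsSpecial2Group (G : Type*) [Group G] [Finite G] : Prop where
  card_pow : ∃ n : ℕ, Nat.card G = 2 ^ n
  frattini_eq : frattini G = Subgroup.center G
  commutator_eq : commutator G = Subgroup.center G
  sq_eq_one : ∀ g ∈ Subgroup.center G, g * g = 1

/-- A special 2-group `G` is real (every element is conjugate to its inverse) if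
and only if for every `v ∈ V = G/Z(G)` there exists `v' ∈ V` with
`q(v') = q(v+v')`, where `q(xZ(G)) = x²` is the associated quadratic map; in
terms of group elements: for every `x` there is `y` with `y² = (xy)²`. -/
theorem real_iff_quadratic_condition (G : Type*) [Group G] [Finite G]
    (hG : IsSpecial2Group G) :
    (∀ x : G, IsConj x x⁻¹) ↔ (∀ x : G, ∃ y : G, y ^ 2 = (x * y) ^ 2) := by
  simp only [isConj_iff]
  constructor
  · intro h x
    obtain ⟨c, hc⟩ := h x
    -- hc : c * x * c⁻¹ = x⁻¹
    refine ⟨c, ?_⟩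
    have h1 : x * c * x = c := by
      have : c * x = x⁻¹ * c := by
        rw [← hc]; group
      calc x * c * x = x * (c * x) := by group
      _ = x * (x⁻¹ * c) := by rw [this]
      _ = c := by group
    calc c ^ 2 = (x * c * x) * c := by rw [h1, pow_two]
    _ = (x * c) ^ 2 := by rw [pow_two]; group
  · intro h x
    obtain ⟨y, hy⟩ := h x
    refine ⟨y, ?_⟩
    have h1 : y = x * y * x := by
      rw [pow_two, pow_two] at hy
      have h2 : y * y = (x * y * x) * y := by rw [hy]; group
      exact mul_right_cancel h2
    have h2 : y⁻¹ = x⁻¹ * y⁻¹ * x⁻¹ := by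
      conv_lhs => rw [h1]
      group
    calc y * x * y⁻¹ = y * x * (x⁻¹ * y⁻¹ * x⁻¹) := by rw [← h2]
    _ = x⁻¹ := by group
end

section
/- Let G be a real special 2-group with associated quadratic map q : V → W, where V = G/Z(G) and W = Z(G). If v ∈ V satisfies v ∉ rad(s∘b_q) for every nonzero linear map s : W → F₂, then the set {(v,w) : w ∈ W} (i.e., the full coset of Z(G) over v) is a single conjugacy class of G. -/
open scoped commutatorElement

/-!
When all commutators `⁅x, y⁆` are central, `y ↦ ⁅x, y⁆` is a homomorphism `G → Z(G)` and the
conjugates of `x` are exactly the elements `x * ⁅x, y⁆`. So the conjugacy class of `x` fills the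
coset `x Z(G)` iff this homomorphism is onto. Its image is a subgroup of the elementary abelian
2-group `Z(G)`; were it proper, some nontrivial character `Z(G) → F₂` would vanish on it, which is
exactly what the hypothesis on `x` forbids.
-/

section ElementaryAbelian

open scoped IsMulCommutative

variable {A : Type*} [Group A] [IsMulCommutative A]

theorem exists_monoidHom_zmodTwo_ne_one_of_notMem (hA : ∀ a : A, a * a = 1)
    {H : Subgroup A} {a : A} (ha : a ∉ H) :
    ∃ s : A →* Multiplicative (ZMod 2), H ≤ s.ker ∧ s a ≠ 1 := by
  let _ : Module (ZMod 2) (Additive A) :=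
    AddCommGroup.zmodModule fun b => by rw [two_nsmul]; exact hA b.toMul
  obtain ⟨f, hfa, hfH⟩ := Submodule.exists_dual_map_eq_bot_of_notMem
    (p := AddSubgroup.toZModSubmodule 2 (Subgroup.toAddSubgroup H)) (x := Additive.ofMul a) ha
    inferInstance
  refine ⟨AddMonoidHom.toMultiplicativeRight f.toAddMonoidHom, fun h hh => ?_, ?_⟩
  · exact (Submodule.mem_bot _).mp (hfH ▸ Submodule.mem_map_of_mem (f := f) hh)
  · exact hfa

theorem MonoidHom.surjective_of_forall_exists_apply_ne_one {G : Type*} [Group G]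
    (hA : ∀ a : A, a * a = 1) (f : G →* A)
    (hf : ∀ s : A →* Multiplicative (ZMod 2), s ≠ 1 → ∃ g, s (f g) ≠ 1) :
    Function.Surjective f := by
  intro a
  by_contra! ha
  obtain ⟨s, hs, hsa⟩ := exists_monoidHom_zmodTwo_ne_one_of_notMem hA
    (H := f.range) (a := a) fun ⟨g, hg⟩ => ha g hg
  obtain ⟨g, hg⟩ := hf s fun h => hsa (by rw [h, MonoidHom.one_apply])
  exact hg (hs ⟨g, rfl⟩)

end ElementaryAbelian

section CentralCommutators

variable {G : Type*} [Group G]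

theorem commutatorElement_mul_right_of_mem_center {a b c : G} (hc : ⁅a, c⁆ ∈ Subgroup.center G) :
    ⁅a, b * c⁆ = ⁅a, b⁆ * ⁅a, c⁆ := by
  rw [commutatorElement_mul_right_eq_mul_conj, mul_assoc _ b, Subgroup.mem_center_iff.mp hc b,
    mul_assoc, mul_inv_cancel_right]

theorem commutatorElement_inv_inv_of_mem_center {a b : G} (h : ⁅a, b⁆ ∈ Subgroup.center G) :
    ⁅a⁻¹, b⁻¹⁆ = ⁅a, b⁆ :=
  calc ⁅a⁻¹, b⁻¹⁆ = (b * a)⁻¹ * (⁅a, b⁆ * (b * a)) := by simp only [commutatorElement_def]; group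
    _ = ⁅a, b⁆ := by rw [← Subgroup.mem_center_iff.mp h, inv_mul_cancel_left]

def commutatorElementHom (x : G) (hx : ∀ y, ⁅x, y⁆ ∈ Subgroup.center G) :
    G →* Subgroup.center G where
  toFun y := ⟨⁅x, y⁆, hx y⟩
  map_one' := Subtype.ext (commutatorElement_one_right x)
  map_mul' _ _ := Subtype.ext (commutatorElement_mul_right_of_mem_center (hx _))

theorem isConj_iff_exists_commutatorElement_eq {x : G} (hx : ∀ y, ⁅x, y⁆ ∈ Subgroup.center G)
    (g : G) : IsConj x g ↔ ∃ y, ⁅x, y⁆ = x⁻¹ * g := by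
  rw [isConj_iff]
  constructor
  · rintro ⟨c, rfl⟩
    refine ⟨c⁻¹, ?_⟩
    rw [← commutatorElement_inv_inv_of_mem_center (hx c⁻¹), inv_inv, commutatorElement_def]
    group
  · rintro ⟨y, hy⟩
    refine ⟨y⁻¹, ?_⟩
    rw [← mul_inv_cancel_left x g, ← hy, ← commutatorElement_inv_inv_of_mem_center (hx y),
      commutatorElement_def]
    group

end CentralCommutators

/-- Linear maps `s : W → F₂` are encoded as homomorphisms `Z(G) →* Multiplicative (ZMod 2)`, and
`v ∉ rad (s ∘ b_q)` as the existence of `y` with `s ⁅x, y⁆ ≠ 1`. -/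
theorem conjugacy_class_of_nonradical_element_general (G : Type*) [Group G] [Finite G]
    (hG : IsSpecial2Group G)
    (hcomm : ∀ x y : G, ⁅x, y⁆ ∈ Subgroup.center G)
    (x : G)
    (hx : ∀ s : Subgroup.center G →* Multiplicative (ZMod 2), s ≠ 1 →
      ∃ y : G, s ⟨⁅x, y⁆, hcomm x y⟩ ≠ 1) :
    ∀ g : G, IsConj x g ↔ x⁻¹ * g ∈ Subgroup.center G := by
  intro g
  rw [isConj_iff_exists_commutatorElement_eq (hcomm x)]
  refine ⟨fun ⟨y, hy⟩ => hy ▸ hcomm x y, fun hg => ?_⟩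
  have hZ_sq : ∀ z : Subgroup.center G, z * z = 1 := fun z => Subtype.ext (hG.sq_eq_one z z.2)
  obtain ⟨y, hy⟩ := (commutatorElementHom x (hcomm x)).surjective_of_forall_exists_apply_ne_one
    hZ_sq hx ⟨x⁻¹ * g, hg⟩
  exact ⟨y, congrArg Subtype.val hy⟩

/-- Let `G` be a real special 2-group, with associated quadratic map
`q : V = G/Z(G) → W = Z(G)` whose polar map is the commutator map, the linear
maps `s : W → F₂` being the homomorphisms `Z(G) →* Multiplicative (ZMod 2)`.
If `x ∈ G` represents a coset `v ∈ V` lying outside `rad(s∘b_q)` for every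
nonzero `s` (i.e. for every `s ≠ 1` there is `y` with `s(⁅x,y⁆) ≠ 1`), then the
full coset `xZ(G) = {(v,w) : w ∈ W}` is a single conjugacy class of `G`: the
conjugates of `x` are exactly the elements `g` with `x⁻¹g ∈ Z(G)`. -/
theorem conjugacy_class_of_nonradical_element (G : Type*) [Group G] [Finite G]
    (hG : IsSpecial2Group G)
    (hreal : ∀ x : G, IsConj x x⁻¹)
    (hcomm : ∀ x y : G, ⁅x, y⁆ ∈ Subgroup.center G)
    (x : G)
    (hx : ∀ s : Subgroup.center G →* Multiplicative (ZMod 2), s ≠ 1 →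
      ∃ y : G, s ⟨⁅x, y⁆, hcomm x y⟩ ≠ 1) :
    ∀ g : G, IsConj x g ↔ x⁻¹ * g ∈ Subgroup.center G :=
  conjugacy_class_of_nonradical_element_general G hG hcomm x hx
end

section
/- Let G be a real special 2-group with quadratic map q : V → W and normal 2-cocycle c representing q. For a nonzero linear map s : W → F₂ with induced regular quadratic form q_s on V_s = V/rad(s∘b_q) represented by normal 2-cocycle c_s, there exists a map λ : V → F₂ with λ(0) = 0 such that for all v, v' ∈ V: c_s(ε(v), ε(v')) = s(c(v,v')) - λ(v+v') + λ(v) + λ(v'), where ε : V → V_s is the quotient map. Consequently, for each linear map t : rad(s∘b_q) → F₂ extended to h : V → F₂ via a chosen complement, the map f(v,w) = (ε(v), s(w) - λ(v) - h(v)) is a surjective group homomorphism from G (with multiplication via c) onto the extraspecial group G_s (with multiplication via c_s). -/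
/-!
The difference `d(v, v') = c_s(ε v, ε v') - s(c(v, v'))` is a normalised `F₂`-valued 2-cocycle on
`V` vanishing on the diagonal, since `c_s ∘ ε` and `s ∘ c` both restrict to `s ∘ q` there. Such a
cocycle is antisymmetric, hence symmetric over `F₂`, so the extension of `V` by `F₂` it defines is
abelian of exponent 2, i.e. an `F₂`-vector space. The projection onto `V` therefore has a linear
section, whose second coordinate is `-λ` for a `λ` with `d = δλ`. That identity is exactly the
homomorphism property of `f`, and `s ≠ 0` makes `f` surjective.
-/

section

variable {V A : Type*} [AddCommGroup V] [AddCommGroup A]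

structure IsNormalCocycle (d : V → V → A) : Prop where
  cocycle : ∀ u v w, d v w - d (u + v) w + d u (v + w) - d u v = 0
  map_zero_right : ∀ v, d v 0 = 0
  map_zero_left : ∀ v, d 0 v = 0

namespace IsNormalCocycle

variable {d d' : V → V → A}

theorem add_left_add (hd : IsNormalCocycle d) (u v w : V) :
    d (u + v) w + d u v = d u (v + w) + d v w := by
  rw [← sub_eq_zero, ← neg_eq_zero, ← hd.cocycle u v w]
  abel

theorem sub (hd : IsNormalCocycle d) (hd' : IsNormalCocycle d') :
    IsNormalCocycle fun v w => d v w - d' v w where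
  cocycle u v w := by linear_combination (norm := abel) hd.cocycle u v w - hd'.cocycle u v w
  map_zero_right v := by rw [hd.map_zero_right, hd'.map_zero_right, sub_zero]
  map_zero_left v := by rw [hd.map_zero_left, hd'.map_zero_left, sub_zero]

theorem map {B F : Type*} [AddCommGroup B] [FunLike F A B] [AddMonoidHomClass F A B]
    (hd : IsNormalCocycle d) (f : F) : IsNormalCocycle fun v w => f (d v w) where
  cocycle u v w := by simpa only [map_sub, map_add, map_zero] using congrArg f (hd.cocycle u v w)
  map_zero_right v := by rw [hd.map_zero_right, map_zero]
  map_zero_left v := by rw [hd.map_zero_left, map_zero]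

theorem comp {U F : Type*} [AddCommGroup U] [FunLike F U V] [AddMonoidHomClass F U V]
    (hd : IsNormalCocycle d) (g : F) : IsNormalCocycle fun u u' => d (g u) (g u') where
  cocycle u v w := by simpa only [map_add] using hd.cocycle (g u) (g v) (g w)
  map_zero_right u := by rw [map_zero, hd.map_zero_right]
  map_zero_left u := by rw [map_zero, hd.map_zero_left]

theorem apply_eq_neg_apply_swap [Module (ZMod 2) V] (hd : IsNormalCocycle d)
    (hdiag : ∀ v, d v v = 0) (v w : V) : d v w = -d w v := by
  have hvvw := hd.add_left_add v v w
  have hwvw := hd.add_left_add w v (v + w)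
  simp only [ZModModule.add_self, add_comm w v, ← add_assoc, hd.map_zero_left, hdiag, zero_add,
    add_zero] at hvvw hwvw
  rw [eq_neg_iff_add_eq_zero, hwvw, add_comm, hvvw.symm]

end IsNormalCocycle

/-- The extension of `V` by `A` with cocycle `d`: the parameter `d` enters only through the
twisted addition `(v, a) + (w, b) = (v + w, d v w + a + b)`. -/
@[ext]
structure CocycleExt (d : V → V → A) where
  fst : V
  snd : A

namespace CocycleExt

variable {d : V → V → A}

instance : Zero (CocycleExt d) := ⟨⟨0, 0⟩⟩

instance : Add (CocycleExt d) := ⟨fun x y => ⟨x.fst + y.fst, d x.fst y.fst + x.snd + y.snd⟩⟩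

instance : Neg (CocycleExt d) := ⟨fun x => ⟨-x.fst, -x.snd - d x.fst (-x.fst)⟩⟩

@[simp] theorem fst_zero : (0 : CocycleExt d).fst = 0 := rfl
@[simp] theorem snd_zero : (0 : CocycleExt d).snd = 0 := rfl
@[simp] theorem fst_add (x y : CocycleExt d) : (x + y).fst = x.fst + y.fst := rfl
@[simp] theorem snd_add (x y : CocycleExt d) :
    (x + y).snd = d x.fst y.fst + x.snd + y.snd := rfl
@[simp] theorem fst_neg (x : CocycleExt d) : (-x).fst = -x.fst := rfl
@[simp] theorem snd_neg (x : CocycleExt d) : (-x).snd = -x.snd - d x.fst (-x.fst) := rfl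

abbrev addCommGroup (hd : IsNormalCocycle d) (hsymm : ∀ v w, d v w = d w v) :
    AddCommGroup (CocycleExt d) where
  add_assoc x y z := by
    ext
    · exact add_assoc _ _ _
    · simp only [snd_add, fst_add]
      linear_combination (norm := abel) hd.add_left_add x.fst y.fst z.fst
  zero_add x := by ext <;> simp [hd.map_zero_left]
  add_zero x := by ext <;> simp [hd.map_zero_right]
  add_comm x y := by
    ext
    · exact add_comm _ _
    · rw [snd_add, snd_add, hsymm, add_assoc, add_assoc, add_comm x.snd]
  neg_add_cancel x := by
    ext
    · exact neg_add_cancel _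
    · rw [snd_add, snd_neg, fst_neg, hsymm, snd_zero]
      abel
  nsmul := nsmulRec
  zsmul := zsmulRec

end CocycleExt

theorem IsNormalCocycle.exists_eq_coboundary [Module (ZMod 2) V] {d : V → V → ZMod 2}
    (hd : IsNormalCocycle d) (hdiag : ∀ v, d v v = 0) :
    ∃ lam : V → ZMod 2, lam 0 = 0 ∧ ∀ v w, d v w = lam v + lam w - lam (v + w) := by
  let _ := CocycleExt.addCommGroup hd fun v w => by
    rw [hd.apply_eq_neg_apply_swap hdiag, ZMod.neg_eq_self_mod_two]
  let _ : Module (ZMod 2) (CocycleExt d) := AddCommGroup.zmodModule fun x => by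
    rw [two_nsmul]
    ext
    · exact ZModModule.add_self x.fst
    · rw [CocycleExt.snd_add, hdiag, zero_add, ZModModule.add_self, CocycleExt.snd_zero]
  let π : CocycleExt d →ₗ[ZMod 2] V :=
    (AddMonoidHom.mk' CocycleExt.fst fun _ _ => rfl).toZModLinearMap 2
  obtain ⟨σ, hσ⟩ := π.exists_rightInverse_of_surjective
    (LinearMap.range_eq_top.2 fun v => ⟨⟨v, 0⟩, rfl⟩)
  have hfst (v : V) : (σ v).fst = v := LinearMap.congr_fun hσ v
  refine ⟨fun v => -(σ v).snd, ?_, fun v w => ?_⟩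
  · beta_reduce
    rw [map_zero, CocycleExt.snd_zero, neg_zero]
  beta_reduce
  have hadd := congrArg CocycleExt.snd (map_add σ v w)
  rw [CocycleExt.snd_add, hfst, hfst] at hadd
  rw [hadd]
  abel

end

theorem exists_lambda_and_surjective_homs_general
    (V W : Type*) [AddCommGroup V] [Module (ZMod 2) V] [AddCommGroup W] [Module (ZMod 2) W]
    (c : V → V → W)
    (hcocycle : ∀ v₁ v₂ v₃ : V,
      c v₂ v₃ - c (v₁ + v₂) v₃ + c v₁ (v₂ + v₃) - c v₁ v₂ = 0)
    (hnorm_right : ∀ v : V, c v 0 = 0) (hnorm_left : ∀ v : V, c 0 v = 0)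
    (q : V → W) (hq : ∀ v : V, q v = c v v)
    (Bq : V →ₗ[ZMod 2] V →ₗ[ZMod 2] W)
    (s : W →ₗ[ZMod 2] ZMod 2) (hs : s ≠ 0)
    (qs : (V ⧸ LinearMap.ker (Bq.compr₂ s)) → ZMod 2)
    (hqs : ∀ v : V, qs (Submodule.Quotient.mk v) = s (q v))
    (cs : (V ⧸ LinearMap.ker (Bq.compr₂ s)) → (V ⧸ LinearMap.ker (Bq.compr₂ s)) → ZMod 2)
    (hcs_cocycle : ∀ u₁ u₂ u₃,
      cs u₂ u₃ - cs (u₁ + u₂) u₃ + cs u₁ (u₂ + u₃) - cs u₁ u₂ = 0)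
    (hcs_norm_right : ∀ u, cs u 0 = 0) (hcs_norm_left : ∀ u, cs 0 u = 0)
    (hcs_diag : ∀ u, cs u u = qs u) :
    ∃ lam : V → ZMod 2, lam 0 = 0 ∧
      (∀ v v' : V,
        cs (Submodule.Quotient.mk v) (Submodule.Quotient.mk v') =
          s (c v v') - lam (v + v') + lam v + lam v') ∧
      (∀ (V' : Submodule (ZMod 2) V), IsCompl (LinearMap.ker (Bq.compr₂ s)) V' →
        ∀ (t : ↥(LinearMap.ker (Bq.compr₂ s)) →ₗ[ZMod 2] ZMod 2)
          (h : V →ₗ[ZMod 2] ZMod 2),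
          (∀ x : ↥(LinearMap.ker (Bq.compr₂ s)), h (x : V) = t x) →
          (∀ x ∈ V', h x = 0) →
          ∃ f : V × W → (V ⧸ LinearMap.ker (Bq.compr₂ s)) × ZMod 2,
            (∀ p : V × W,
              f p = (Submodule.Quotient.mk p.1, s p.2 - lam p.1 - h p.1)) ∧
            Function.Surjective f ∧
            (∀ p p' : V × W,
              f (p.1 + p'.1, c p.1 p'.1 + p.2 + p'.2) =
                ((f p).1 + (f p').1, cs (f p).1 (f p').1 + (f p).2 + (f p').2))) := by
  have hd : IsNormalCocycle fun v v' =>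
      cs (Submodule.Quotient.mk v) (Submodule.Quotient.mk v') - s (c v v') :=
    (IsNormalCocycle.comp ⟨hcs_cocycle, hcs_norm_right, hcs_norm_left⟩ (Submodule.mkQ _)).sub
      (IsNormalCocycle.map ⟨hcocycle, hnorm_right, hnorm_left⟩ s)
  obtain ⟨lam, hlam0, hlam⟩ := hd.exists_eq_coboundary fun v => by
    rw [hcs_diag, hqs, hq, sub_self]
  have hcs (v v' : V) : cs (Submodule.Quotient.mk v) (Submodule.Quotient.mk v') =
      s (c v v') - lam (v + v') + lam v + lam v' := by
    linear_combination hlam v v'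
  refine ⟨lam, hlam0, hcs, fun _ _ _ h _ _ => ⟨_, fun _ => rfl, ?_, fun p p' => ?_⟩⟩
  · rintro ⟨u, a⟩
    obtain ⟨v, rfl⟩ := Submodule.Quotient.mk_surjective _ u
    obtain ⟨w, hw⟩ := LinearMap.surjective_of_ne_zero hs (a + lam v + h v)
    refine ⟨(v, w), Prod.ext rfl ?_⟩
    dsimp only
    rw [hw]
    ring
  · refine Prod.ext rfl ?_
    dsimp only
    rw [hcs, map_add, map_add, map_add]
    ring

/-- Let `G` be a real special 2-group realised on `V × W` by a normal 2-cocycle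
`c` with `c(v,v) = q(v)`, where `q : V → W` is the associated quadratic map with
polar map `Bq`.  For a nonzero linear `s : W → F₂`, let `rad = ker(s∘b_q)`,
`V_s = V/rad`, and let `q_s` (with `q_s(ε v) = s(q v)`) be represented by a
normal 2-cocycle `c_s` on `V_s`.  Then there is `λ : V → F₂` with `λ(0) = 0` and
`c_s(ε v, ε v') = s(c(v,v')) - λ(v+v') + λ(v) + λ(v')`, and consequently for
every linear `t : rad → F₂` extended to a linear `h : V → F₂` vanishing on a
chosen complement of `rad`, the map `f(v,w) = (ε v, s(w) - λ(v) - h(v))` is a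
surjective homomorphism from `G` (multiplication via `c`) onto the extraspecial
group `G_s` (multiplication via `c_s`). -/
theorem exists_lambda_and_surjective_homs
    (V W : Type*) [AddCommGroup V] [Module (ZMod 2) V] [AddCommGroup W] [Module (ZMod 2) W]
    [FiniteDimensional (ZMod 2) V] [FiniteDimensional (ZMod 2) W]
    (c : V → V → W)
    (hcocycle : ∀ v₁ v₂ v₃ : V,
      c v₂ v₃ - c (v₁ + v₂) v₃ + c v₁ (v₂ + v₃) - c v₁ v₂ = 0)
    (hnorm_right : ∀ v : V, c v 0 = 0) (hnorm_left : ∀ v : V, c 0 v = 0)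
    (q : V → W) (hq : ∀ v : V, q v = c v v)
    (Bq : V →ₗ[ZMod 2] V →ₗ[ZMod 2] W)
    (hBq : ∀ v w : V, Bq v w = q (v + w) - q v - q w)
    (hreal : ∀ v : V, ∃ v' : V, q v' = q (v + v'))
    (s : W →ₗ[ZMod 2] ZMod 2) (hs : s ≠ 0)
    (qs : (V ⧸ LinearMap.ker (Bq.compr₂ s)) → ZMod 2)
    (hqs : ∀ v : V, qs (Submodule.Quotient.mk v) = s (q v))
    (cs : (V ⧸ LinearMap.ker (Bq.compr₂ s)) → (V ⧸ LinearMap.ker (Bq.compr₂ s)) → ZMod 2)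
    (hcs_cocycle : ∀ u₁ u₂ u₃,
      cs u₂ u₃ - cs (u₁ + u₂) u₃ + cs u₁ (u₂ + u₃) - cs u₁ u₂ = 0)
    (hcs_norm_right : ∀ u, cs u 0 = 0) (hcs_norm_left : ∀ u, cs 0 u = 0)
    (hcs_diag : ∀ u, cs u u = qs u) :
    ∃ lam : V → ZMod 2, lam 0 = 0 ∧
      (∀ v v' : V,
        cs (Submodule.Quotient.mk v) (Submodule.Quotient.mk v') =
          s (c v v') - lam (v + v') + lam v + lam v') ∧
      (∀ (V' : Submodule (ZMod 2) V), IsCompl (LinearMap.ker (Bq.compr₂ s)) V' →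
        ∀ (t : ↥(LinearMap.ker (Bq.compr₂ s)) →ₗ[ZMod 2] ZMod 2)
          (h : V →ₗ[ZMod 2] ZMod 2),
          (∀ x : ↥(LinearMap.ker (Bq.compr₂ s)), h (x : V) = t x) →
          (∀ x ∈ V', h x = 0) →
          ∃ f : V × W → (V ⧸ LinearMap.ker (Bq.compr₂ s)) × ZMod 2,
            (∀ p : V × W,
              f p = (Submodule.Quotient.mk p.1, s p.2 - lam p.1 - h p.1)) ∧
            Function.Surjective f ∧
            (∀ p p' : V × W,
              f (p.1 + p'.1, c p.1 p'.1 + p.2 + p'.2) =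
                ((f p).1 + (f p').1, cs (f p).1 (f p').1 + (f p).2 + (f p').2))) :=
  exists_lambda_and_surjective_homs_general V W c hcocycle hnorm_right hnorm_left q hq Bq s hs qs
    hqs cs hcs_cocycle hcs_norm_right hcs_norm_left hcs_diag
end
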